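/- Define v_n = log|B_{2n}| where B_{2n} is the 2n-th Bernoulli number. Then for all n ≥ 4, the second difference v_{n+2}/(n+2) - 2v_{n+1}/(n+1) + v_n/n is negative. -/

import Mathlib

/-!
Euler's formula `|B_{2m}| = 2 (2m)! ζ(2m) / (2π)^{2m}` gives
`v_m / m = (log 2 + log (2m)! + log ζ(2m)) / m - 2 log (2π)`, and the constant drops out of the
second difference. Multiplied by `n (n+1) (n+2)`, the second difference of `log 2 / m` is `2 log 2`;
that of `log (2m)! / m` is at most `2n + 1 - 4n log 2`, by `(2n)! ≤ (n + 1/2)^{2n}` (pair `k` with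
`2n + 1 - k`) and `log (1 + x) ≤ x`; and `0 ≤ log ζ(2m) ≤ ζ(2m) - 1 ≤ 4^{1-m} (ζ(2) - 1)` makes the
zeta part exponentially small. Since `4 log 2 > 2`, the factorial term wins once `n ≥ 4`.
-/

open Real Finset
open scoped Nat

/-- `v n = log |B_{2n}|`, with `B_k` the Bernoulli numbers. -/
noncomputable def vBern (n : ℕ) : ℝ := Real.log |((bernoulli (2 * n) : ℚ) : ℝ)|

theorem Nat.factorial_sq_mul_four_pow_le (m : ℕ) : m ! ^ 2 * 4 ^ m ≤ (m + 1) ^ (2 * m) := by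
  have hsq : m ! ^ 2 = ∏ k ∈ range m, (k + 1) * (m - k) := by
    rw [prod_mul_distrib, ← prod_range_add_one_eq_factorial, sq]
    congr 1
    rw [← prod_range_reflect]
    exact prod_congr rfl fun k hk => by have := mem_range.1 hk; omega
  have hpair : ∀ k ∈ range m, (k + 1) * (m - k) * 4 ≤ (m + 1) ^ 2 := fun k hk => by
    have := mem_range.1 hk
    have h := four_mul_le_sq_add (k + 1) (m - k)
    rw [show k + 1 + (m - k) = m + 1 by omega] at h
    linarith
  calc m ! ^ 2 * 4 ^ m = ∏ k ∈ range m, (k + 1) * (m - k) * 4 := by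
        rw [prod_mul_distrib, prod_const, card_range, hsq]
    _ ≤ ∏ _k ∈ range m, (m + 1) ^ 2 := prod_le_prod' hpair
    _ = (m + 1) ^ (2 * m) := by rw [prod_const, card_range, ← pow_mul]

theorem Real.log_factorial_le (m : ℕ) : log (m ! : ℝ) ≤ m * log ((m + 1) / 2) := by
  have h : (m ! : ℝ) ^ 2 * 4 ^ m ≤ ((m : ℝ) + 1) ^ (2 * m) := by
    exact_mod_cast Nat.factorial_sq_mul_four_pow_le m
  have := log_le_log (by positivity) h
  rw [log_mul (by positivity) (by positivity), log_pow, log_pow, log_pow,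
    show (4 : ℝ) = 2 ^ 2 by norm_num, log_pow] at this
  rw [log_div (by positivity) two_ne_zero]
  push_cast at this
  linarith

theorem Real.log_factorial_two_mul_succ (n : ℕ) :
    log ((2 * (n + 1))! : ℝ) = log ((2 * n)! : ℝ) + log ((2 * n + 1) * (2 * n + 2)) := by
  rw [show 2 * (n + 1) = 2 * n + 1 + 1 by ring, Nat.factorial_succ, Nat.factorial_succ]
  push_cast
  rw [← log_mul (by positivity) (by positivity)]
  ring_nf

theorem Real.log_add_le_log_add_div {x δ : ℝ} (hx : 0 < x) (hδ : 0 ≤ δ) :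
    log (x + δ) ≤ log x + δ / x := by
  have h := log_le_sub_one_of_pos (show 0 < (x + δ) / x by positivity)
  rw [log_div (by positivity) hx.ne', add_div, div_self hx.ne'] at h
  linarith

def weightedSecondDiff (f : ℕ → ℝ) (n : ℕ) : ℝ :=
  n * (n + 1) * f (n + 2) - 2 * n * (n + 2) * f (n + 1) + (n + 1) * (n + 2) * f n

theorem div_second_diff_eq_weightedSecondDiff (f : ℕ → ℝ) {n : ℕ} (hn : n ≠ 0) :
    f (n + 2) / ((n : ℝ) + 2) - 2 * f (n + 1) / ((n : ℝ) + 1) + f n / n =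
      weightedSecondDiff f n / (n * (n + 1) * (n + 2)) := by
  have : (n : ℝ) ≠ 0 := Nat.cast_ne_zero.2 hn
  unfold weightedSecondDiff
  field_simp

theorem weightedSecondDiff_log_factorial_two_mul_le (n : ℕ) :
    weightedSecondDiff (fun m ↦ log ((2 * m)! : ℝ)) n ≤ 2 * n + 1 - 4 * n * log 2 := by
  set F := log ((2 * n)! : ℝ)
  set b₁ := log ((2 * (n : ℝ) + 1) * (2 * n + 2))
  set b₂ := log ((2 * (n : ℝ) + 3) * (2 * n + 4))
  have hF₁ : log ((2 * (n + 1))! : ℝ) = F + b₁ := log_factorial_two_mul_succ n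
  have hF₂ : log ((2 * (n + 2))! : ℝ) = F + b₁ + b₂ := by
    rw [log_factorial_two_mul_succ (n + 1), hF₁]; congr 2; push_cast; ring
  have hW : weightedSecondDiff (fun m ↦ log ((2 * m)! : ℝ)) n =
      2 * (F - n * b₁) + n * (n + 1) * (b₂ - b₁) := by
    simp only [weightedSecondDiff, hF₁, hF₂]; ring
  have hb₁ : b₁ = log (2 * n + 1) + log (2 * n + 2) := log_mul (by positivity) (by positivity)
  have hb₂ : b₂ = log (2 * n + 3) + log (2 * n + 4) := log_mul (by positivity) (by positivity)
  have hFb : F - n * b₁ ≤ -(2 * n * log 2) := by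
    have hF : F ≤ 2 * n * (log (2 * n + 1) - log 2) := by
      have := log_factorial_le (2 * n)
      rw [log_div (by positivity) two_ne_zero] at this
      push_cast at this
      linarith
    have hmono : log (2 * n + 1) ≤ log (2 * n + 2) := log_le_log (by positivity) (by linarith)
    rw [hb₁]
    nlinarith [(n.cast_nonneg : (0 : ℝ) ≤ n)]
  have hgap : n * (n + 1) * (b₂ - b₁) ≤ 2 * n + 1 := by
    have h₃ : log (2 * n + 3) ≤ log (2 * n + 1) + 2 / (2 * n + 1) := by
      convert log_add_le_log_add_div (x := 2 * n + 1) (by positivity) zero_le_two using 2; ring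
    have h₄ : log (2 * n + 4) ≤ log (2 * n + 2) + 2 / (2 * n + 2) := by
      convert log_add_le_log_add_div (x := 2 * n + 2) (by positivity) zero_le_two using 2; ring
    have hsum : n * (n + 1) * (2 / (2 * n + 1) + 2 / (2 * n + 2)) ≤ (2 * n + 1 : ℝ) := by
      rw [div_add_div _ _ (by positivity) (by positivity), mul_div_assoc', div_le_iff₀ (by positivity)]
      nlinarith [(n.cast_nonneg : (0 : ℝ) ≤ n)]
    have hd : b₂ - b₁ ≤ 2 / (2 * n + 1) + 2 / (2 * n + 2) := by
      rw [hb₁, hb₂]; linarith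
    nlinarith [mul_le_mul_of_nonneg_left hd (by positivity : (0 : ℝ) ≤ n * (n + 1))]
  linarith

noncomputable def zetaTwoMul (m : ℕ) : ℝ := ∑' k : ℕ, 1 / (k : ℝ) ^ (2 * m)

theorem summable_one_div_nat_pow_two_mul {m : ℕ} (hm : m ≠ 0) :
    Summable fun k : ℕ ↦ 1 / (k : ℝ) ^ (2 * m) :=
  summable_one_div_nat_pow.2 (by omega)

theorem zetaTwoMul_sub_one_eq_tsum {m : ℕ} (hm : m ≠ 0) :
    zetaTwoMul m - 1 = ∑' k : ℕ, 1 / ((k + 2 : ℕ) : ℝ) ^ (2 * m) := by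
  rw [zetaTwoMul, ← (summable_one_div_nat_pow_two_mul hm).sum_add_tsum_nat_add 2]
  simp [Finset.sum_range_succ, hm]

theorem one_le_zetaTwoMul {m : ℕ} (hm : m ≠ 0) : 1 ≤ zetaTwoMul m := by
  rw [← sub_nonneg, zetaTwoMul_sub_one_eq_tsum hm]
  exact tsum_nonneg fun k ↦ by positivity

theorem abs_bernoulli_two_mul {m : ℕ} (hm : m ≠ 0) :
    |((bernoulli (2 * m) : ℚ) : ℝ)| = 2 * (2 * m)! * zetaTwoMul m / (2 * π) ^ (2 * m) := by
  have h : zetaTwoMul m = (-1) ^ (m + 1) * 2 ^ (2 * m - 1) * π ^ (2 * m) *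
      bernoulli (2 * m) / (2 * m)! := (hasSum_zeta_nat hm).tsum_eq
  have hsign : 0 ≤ (-1) ^ (m + 1) * ((bernoulli (2 * m) : ℚ) : ℝ) := by
    have : (-1) ^ (m + 1) * ((bernoulli (2 * m) : ℚ) : ℝ) =
        zetaTwoMul m * (2 * m)! / (2 ^ (2 * m - 1) * π ^ (2 * m)) := by
      rw [h]; field_simp
    rw [this]
    have := one_le_zetaTwoMul hm
    positivity
  have h2 : (2 : ℝ) ^ (2 * m) = 2 * 2 ^ (2 * m - 1) := by
    rw [← pow_succ']; congr 1; omega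
  rw [h, mul_pow, h2]
  field_simp
  rw [← abs_of_nonneg hsign, abs_mul, abs_neg_one_pow, one_mul]

theorem zetaTwoMul_one : zetaTwoMul 1 = π ^ 2 / 6 := hasSum_zeta_two.tsum_eq

theorem zetaTwoMul_succ_sub_one_le (j : ℕ) :
    zetaTwoMul (j + 1) - 1 ≤ (zetaTwoMul 1 - 1) / 4 ^ j := by
  rw [zetaTwoMul_sub_one_eq_tsum j.succ_ne_zero, zetaTwoMul_sub_one_eq_tsum one_ne_zero,
    ← tsum_div_const]
  refine Summable.tsum_le_tsum (fun k ↦ ?_)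
    ((summable_nat_add_iff 2).2 (summable_one_div_nat_pow_two_mul j.succ_ne_zero))
    (((summable_nat_add_iff 2).2 (summable_one_div_nat_pow_two_mul one_ne_zero)).div_const _)
  have hx : (4 : ℝ) ≤ ((k + 2 : ℕ) : ℝ) ^ 2 := by push_cast; nlinarith [(k.cast_nonneg : (0:ℝ) ≤ k)]
  rw [div_div, Nat.succ_eq_add_one, mul_add_one, pow_add, pow_mul, mul_comm, mul_one]
  gcongr

theorem log_zetaTwoMul_le {m : ℕ} (hm : m ≠ 0) : log (zetaTwoMul m) ≤ 8 / 3 / 4 ^ m := by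
  obtain ⟨j, rfl⟩ := Nat.exists_eq_succ_of_ne_zero hm
  have hζ₂ : zetaTwoMul 1 - 1 ≤ 2 / 3 := by
    rw [zetaTwoMul_one]; nlinarith [pi_lt_d2, pi_pos]
  calc log (zetaTwoMul (j + 1)) ≤ zetaTwoMul (j + 1) - 1 :=
        log_le_sub_one_of_pos (zero_lt_one.trans_le (one_le_zetaTwoMul hm))
    _ ≤ (zetaTwoMul 1 - 1) / 4 ^ j := zetaTwoMul_succ_sub_one_le j
    _ ≤ 2 / 3 / 4 ^ j := by gcongr
    _ = 8 / 3 / 4 ^ (j + 1) := by rw [pow_succ]; field_simp; norm_num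

theorem weightedSecondDiff_log_zetaTwoMul_le {n : ℕ} (hn : n ≠ 0) :
    weightedSecondDiff (fun m ↦ log (zetaTwoMul m)) n ≤ 16 / 3 * ((n + 1) * (n + 2)) / 4 ^ n := by
  have h₀ := log_zetaTwoMul_le hn
  have h₁ := log_nonneg (one_le_zetaTwoMul n.succ_ne_zero)
  have h₂ : log (zetaTwoMul (n + 2)) ≤ 8 / 3 / 4 ^ n :=
    (log_zetaTwoMul_le (by omega)).trans (by gcongr <;> norm_num)
  have he : (0 : ℝ) ≤ 8 / 3 / 4 ^ n := by positivity
  calc weightedSecondDiff (fun m ↦ log (zetaTwoMul m)) n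
        ≤ 2 * ((n + 1) * (n + 2)) * (8 / 3 / 4 ^ n) := by
        unfold weightedSecondDiff
        nlinarith [mul_le_mul_of_nonneg_left h₂ (by positivity : (0 : ℝ) ≤ n * (n + 1)),
          mul_nonneg (by positivity : (0 : ℝ) ≤ 2 * n * (n + 2)) h₁,
          mul_le_mul_of_nonneg_left h₀ (by positivity : (0 : ℝ) ≤ (n + 1) * (n + 2))]
    _ = 16 / 3 * ((n + 1) * (n + 2)) / 4 ^ n := by ring

theorem vBern_eq {m : ℕ} (hm : m ≠ 0) :
    vBern m = log 2 + log ((2 * m)! : ℝ) + log (zetaTwoMul m) - 2 * m * log (2 * π) := by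
  have hζ : 0 < zetaTwoMul m := zero_lt_one.trans_le (one_le_zetaTwoMul hm)
  rw [vBern, abs_bernoulli_two_mul hm, log_div (by positivity) (by positivity),
    log_mul (by positivity) hζ.ne', log_mul two_ne_zero (by positivity), log_pow]
  push_cast
  ring

theorem Nat.mul_add_one_mul_add_two_le_four_pow {n : ℕ} (hn : 4 ≤ n) :
    128 * ((n + 1) * (n + 2)) ≤ 15 * 4 ^ n := by
  induction n, hn using Nat.le_induction with
  | base => norm_num
  | succ n hn ih => rw [pow_succ]; nlinarith

theorem bernoulli_second_diff_neg (n : ℕ) (hn : 4 ≤ n) :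
    vBern (n + 2) / ((n : ℝ) + 2) - 2 * vBern (n + 1) / ((n : ℝ) + 1) + vBern n / n < 0 := by
  have hn₀ : n ≠ 0 := by omega
  have hW : weightedSecondDiff vBern n = 2 * log 2 +
      weightedSecondDiff (fun m ↦ log ((2 * m)! : ℝ)) n +
      weightedSecondDiff (fun m ↦ log (zetaTwoMul m)) n := by
    simp only [weightedSecondDiff, vBern_eq hn₀, vBern_eq n.succ_ne_zero,
      vBern_eq (n + 1).succ_ne_zero]
    push_cast
    ring
  have hfact := weightedSecondDiff_log_factorial_two_mul_le n
  have hzeta : 16 / 3 * ((n + 1) * (n + 2)) / 4 ^ n ≤ (5 / 8 : ℝ) := by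
    have : (128 : ℝ) * ((n + 1) * (n + 2)) ≤ 15 * 4 ^ n := by
      exact_mod_cast Nat.mul_add_one_mul_add_two_le_four_pow hn
    rw [div_le_iff₀ (by positivity)]
    linarith
  have hlog : 0.6931471803 * (n : ℝ) ≤ log 2 * n :=
    mul_le_mul_of_nonneg_right log_two_gt_d9.le n.cast_nonneg
  have hn₄ : (4 : ℝ) ≤ n := by exact_mod_cast hn
  rw [div_second_diff_eq_weightedSecondDiff vBern hn₀, hW]
  refine div_neg_of_neg_of_pos ?_ (by positivity)
  linarith [weightedSecondDiff_log_zetaTwoMul_le hn₀, log_two_lt_d9]
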